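/- If the perturbation function P of a constrained problem is convex, finite at 0, and Slater's condition holds (there exists θ₀ with f_i(θ₀) < c_i + r_i for all i < m), then strong duality holds: the optimal value of the dual problem sup_{λ≥0} inf_θ L(θ,λ) equals P(0), the optimal value of the primal problem. -/
import Mathlib


open scoped BigOperators

/-- If the perturbation function P is convex, finite at 0, and
Slater's condition holds, then strong duality holds: the dual optimal value
sup_{λ≥0} inf_θ L(θ,λ) equals P(0), the primal optimal value. -/
theorem strong_duality_of_convex_perturbation (n k : ℕ)
    (fm : EuclideanSpace ℝ (Fin n) → ℝ)
    (f : Fin k → EuclideanSpace ℝ (Fin n) → ℝ)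
    (c r : Fin k → ℝ)
    (P : (Fin k → ℝ) → EReal)
    (hP : ∀ ξ, P ξ = ⨅ θ : {θ : EuclideanSpace ℝ (Fin n) //
        ∀ i, f i θ ≤ c i + r i - ξ i}, ((fm θ.1 : ℝ) : EReal))
    (hPconv : ∀ ξ₁ ξ₂ : Fin k → ℝ, ∀ t ∈ Set.Icc (0:ℝ) 1,
      P (t • ξ₁ + (1 - t) • ξ₂) ≤ (t : EReal) * P ξ₁ + ((1 - t : ℝ) : EReal) * P ξ₂)
    (hPfin : P 0 ≠ ⊥ ∧ P 0 ≠ ⊤)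
    (hSlater : ∃ θ₀ : EuclideanSpace ℝ (Fin n), ∀ i, f i θ₀ < c i + r i) :
    (⨆ lam : {l : Fin k → ℝ // ∀ i, 0 ≤ l i},
        ⨅ θ : EuclideanSpace ℝ (Fin n),
          ((fm θ + ∑ i, lam.1 i * (f i θ - c i - r i) : ℝ) : EReal)) = P 0 := by
  obtain ⟨hbot, htop⟩ := hPfin
  obtain ⟨θ₀, hθ₀⟩ := hSlater
  -- a uniform Slater slack δ
  obtain ⟨δ, hδpos, hδ⟩ : ∃ δ > (0:ℝ), ∀ i, f i θ₀ + δ ≤ c i + r i := by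
    rcases isEmpty_or_nonempty (Fin k) with h | h
    · exact ⟨1, one_pos, fun i => (h.elim i)⟩
    · obtain ⟨i₀, -, hmin⟩ := Finset.exists_min_image Finset.univ
        (fun i => c i + r i - f i θ₀) ⟨Classical.arbitrary _, Finset.mem_univ _⟩
      refine ⟨c i₀ + r i₀ - f i₀ θ₀, by have := hθ₀ i₀; linarith, fun i => ?_⟩
      have := hmin i (Finset.mem_univ i); linarith
  set B : Set (Fin k → ℝ) := Metric.ball 0 δ with hB
  have hmemB : ∀ ξ : Fin k → ℝ, ξ ∈ B ↔ ‖ξ‖ < δ := by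
    intro ξ; simp [hB, mem_ball_zero_iff]
  -- θ₀ is feasible for every perturbation in the ball
  have hub : ∀ ξ ∈ B, P ξ ≤ ((fm θ₀ : ℝ) : EReal) := by
    intro ξ hξ
    rw [hP]
    refine iInf_le_of_le ⟨θ₀, fun i => ?_⟩ le_rfl
    have h1 : ξ i ≤ |ξ i| := le_abs_self _
    have h2 : |ξ i| ≤ ‖ξ‖ := by simpa using norm_le_pi_norm ξ i
    have h3 := (hmemB ξ).1 hξ
    have := hδ i
    linarith
  have hntop : ∀ ξ ∈ B, P ξ ≠ ⊤ := by
    intro ξ hξ h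
    have h2 := hub ξ hξ
    rw [h] at h2
    exact (EReal.coe_ne_top (fm θ₀)) (top_le_iff.mp h2)
  have hnbot : ∀ ξ ∈ B, P ξ ≠ ⊥ := by
    intro ξ hξ h
    have h2 := hPconv ξ (-ξ) (1/2) ⟨by norm_num, by norm_num⟩
    have he : (1/2 : ℝ) • ξ + (1 - 1/2 : ℝ) • (-ξ) = 0 := by
      module
    rw [he, h] at h2
    have hh : (((1:ℝ)/2 : ℝ) : EReal) * (⊥ : EReal) = ⊥ :=
      EReal.coe_mul_bot_of_pos (by norm_num)
    rw [hh, EReal.bot_add] at h2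
    exact hbot (le_bot_iff.mp h2)
  set p0 : ℝ := (P 0).toReal with hp0def
  have h0B : (0 : Fin k → ℝ) ∈ B := by rw [hmemB]; simpa using hδpos
  have hp0 : P 0 = ((p0 : ℝ) : EReal) := (EReal.coe_toReal htop hbot).symm
  set g : (Fin k → ℝ) → ℝ := fun ξ => (P ξ).toReal with hgdef
  have hgP : ∀ ξ ∈ B, P ξ = ((g ξ : ℝ) : EReal) := fun ξ h =>
    (EReal.coe_toReal (hntop ξ h) (hnbot ξ h)).symm
  have hg0 : g 0 = p0 := rfl
  have hgub : ∀ ξ ∈ B, g ξ ≤ fm θ₀ := by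
    intro ξ hξ
    have := EReal.toReal_le_toReal (hub ξ hξ) (hnbot ξ hξ) (EReal.coe_ne_top _)
    simpa using this
  -- convexity of g on the ball
  have hgconv : ∀ x ∈ B, ∀ y ∈ B, ∀ a b : ℝ, 0 ≤ a → 0 ≤ b → a + b = 1 →
      g (a • x + b • y) ≤ a * g x + b * g y := by
    intro x hx y hy a b ha hb hab
    have hmem : a • x + b • y ∈ B := (convex_ball (0:Fin k → ℝ) δ) hx hy ha hb hab
    have h2 := hPconv x y a ⟨ha, by linarith⟩
    have hb' : 1 - a = b := by linarith
    rw [hb'] at h2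
    rw [hgP x hx, hgP y hy, hgP _ hmem] at h2
    rw [← EReal.coe_mul, ← EReal.coe_mul, ← EReal.coe_add] at h2
    exact EReal.coe_le_coe_iff.mp h2
  -- the strict epigraph of g over B
  set S : Set ((Fin k → ℝ) × ℝ) := {p | p.1 ∈ B ∧ g p.1 < p.2} with hS
  have hSconv : Convex ℝ S := by
    rintro p ⟨hp1, hp2⟩ q ⟨hq1, hq2⟩ a b ha hb hab
    refine ⟨(convex_ball (0:Fin k → ℝ) δ) hp1 hq1 ha hb hab, ?_⟩
    have h1 : g (a • p.1 + b • q.1) ≤ a * g p.1 + b * g q.1 :=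
      hgconv _ hp1 _ hq1 a b ha hb hab
    have h2 : a * g p.1 + b * g q.1 < a * p.2 + b * q.2 := by
      rcases ha.eq_or_lt with h | h
      · have hb1 : b = 1 := by linarith
        rw [← h, hb1]; simpa using hq2
      · have e2 : b * g q.1 ≤ b * q.2 := mul_le_mul_of_nonneg_left (le_of_lt hq2) hb
        have e1 : a * g p.1 < a * p.2 := by
          exact (mul_lt_mul_iff_right₀ h).2 hp2
        linarith
    exact lt_of_le_of_lt h1 h2
  -- an open box inside S
  have hA : (B ×ˢ Set.Ioi (fm θ₀)) ⊆ interior S := by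
    apply interior_maximal
    · rintro ⟨ξ, t⟩ ⟨hξ, ht⟩
      exact ⟨hξ, lt_of_le_of_lt (hgub ξ hξ) ht⟩
    · exact (Metric.isOpen_ball).prod isOpen_Ioi
  have hb₀mem : (((0:Fin k → ℝ), fm θ₀ + 1)) ∈ interior S :=
    hA ⟨h0B, by simp⟩
  -- separation
  have hpnotin : (((0:Fin k → ℝ), p0)) ∉ interior S := by
    intro h
    exact lt_irrefl p0 (interior_subset h).2
  obtain ⟨φ, hφ⟩ := geometric_hahn_banach_open_point
    (hSconv.interior) isOpen_interior hpnotin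
  -- extend the inequality (non-strictly) to all of S
  have hφS : ∀ q ∈ S, φ q ≤ φ ((0:Fin k → ℝ), p0) := by
    intro q hq
    by_contra hcon
    push_neg at hcon
    set b₀ : (Fin k → ℝ) × ℝ := ((0:Fin k → ℝ), fm θ₀ + 1) with hb₀
    set d : ℝ := φ q - φ ((0:Fin k → ℝ), p0) with hd
    have hdpos : 0 < d := by simp [hd]; linarith
    set M : ℝ := |φ b₀ - φ q| with hM
    set τ : ℝ := min (1/2) (d / (M + 1)) with hτ
    have hMnn : 0 ≤ M := abs_nonneg _
    have hτpos : 0 < τ := lt_min (by norm_num) (div_pos hdpos (by linarith))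
    have hτle : τ ≤ d / (M + 1) := min_le_right _ _
    have hτ1 : τ ≤ 1/2 := min_le_left _ _
    have hmem : τ • b₀ + (1 - τ) • q ∈ interior S :=
      hSconv.combo_interior_self_mem_interior hb₀mem hq hτpos (by linarith) (by ring)
    have h3 := hφ _ hmem
    rw [map_add, map_smul, map_smul] at h3
    simp only [smul_eq_mul] at h3
    -- h3 : τ * φ b₀ + (1 - τ) * φ q < φ (0, p0) = φ q - d
    have h4 : τ * (φ q - φ b₀) > d := by nlinarith
    have h5 : φ q - φ b₀ ≤ M := by
      rw [hM]; have := neg_abs_le (φ b₀ - φ q); linarith [le_abs_self (φ b₀ - φ q)]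
    have h6 : τ * (φ q - φ b₀) ≤ τ * M := mul_le_mul_of_nonneg_left h5 (le_of_lt hτpos)
    have h7 : τ * M ≤ (d / (M + 1)) * M :=
      mul_le_mul_of_nonneg_right hτle hMnn
    have h8 : (d / (M + 1)) * M < d := by
      rw [div_mul_eq_mul_div, div_lt_iff₀ (by linarith : (0:ℝ) < M + 1)]
      nlinarith
    linarith
  -- split φ into its two components
  have hsplit : ∀ (ξ : Fin k → ℝ) (t : ℝ),
      φ (ξ, t) = φ (ξ, 0) + t * φ ((0:Fin k → ℝ), 1) := by
    intro ξ t
    have he : ((ξ, t) : (Fin k → ℝ) × ℝ) = (ξ, 0) + t • ((0:Fin k → ℝ), (1:ℝ)) := by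
      simp [Prod.ext_iff]
    rw [he, map_add, map_smul, smul_eq_mul]
  set β : ℝ := φ ((0:Fin k → ℝ), 1) with hβdef
  have hφ00 : φ ((0:Fin k → ℝ), (0:ℝ)) = 0 := by
    have : ((0:Fin k → ℝ), (0:ℝ)) = (0 : (Fin k → ℝ) × ℝ) := rfl
    rw [this, map_zero]
  have hβneg : β < 0 := by
    have h1 : φ ((0:Fin k → ℝ), p0 + 1) ≤ φ ((0:Fin k → ℝ), p0) := by
      apply hφS
      refine ⟨h0B, ?_⟩
      show g (0 : Fin k → ℝ) < p0 + 1
      rw [hg0]; linarith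
    rw [hsplit 0 (p0 + 1), hsplit 0 p0, hφ00] at h1
    have hβle : β ≤ 0 := by nlinarith
    rcases hβle.lt_or_eq with h | h
    · exact h
    · exfalso
      -- if β = 0 then φ vanishes on a set where it must be negative
      have hzero : ∀ ξ ∈ B, φ (ξ, (0:ℝ)) ≤ 0 := by
        intro ξ hξ
        have hmem : ((ξ, fm θ₀ + 1) : (Fin k → ℝ) × ℝ) ∈ S := by
          refine ⟨hξ, ?_⟩
          show g ξ < fm θ₀ + 1
          linarith [hgub ξ hξ]
        have h9 := hφS _ hmem
        rw [hsplit ξ (fm θ₀ + 1), hsplit 0 p0, hφ00, h] at h9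
        linarith
      have hzero' : ∀ ξ ∈ B, φ (ξ, (0:ℝ)) = 0 := by
        intro ξ hξ
        have h1 := hzero ξ hξ
        have hneg : -ξ ∈ B := by rw [hmemB] at *; simpa using hξ
        have h2 := hzero (-ξ) hneg
        have he : ((-ξ, (0:ℝ)) : (Fin k → ℝ) × ℝ) = -(ξ, (0:ℝ)) := by
          simp [Prod.ext_iff]
        rw [he, map_neg] at h2
        linarith
      have hstrict := hφ _ hb₀mem
      rw [hsplit 0 (fm θ₀ + 1), hsplit 0 p0, hφ00, h] at hstrict
      simp at hstrict
  -- the local subgradient inequality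
  have hloc : ∀ ξ ∈ B, p0 ≤ g ξ + φ (ξ, (0:ℝ)) / β := by
    intro ξ hξ
    have key : φ (ξ, (0:ℝ)) + g ξ * β ≤ p0 * β := by
      have h1 : ∀ ε > (0:ℝ), φ (ξ, (0:ℝ)) + g ξ * β ≤ p0 * β + ε := by
        intro ε hε
        set u : ℝ := ε / (-β) with hu
        have hupos : 0 < u := div_pos hε (by linarith)
        have hmem : ((ξ, g ξ + u) : (Fin k → ℝ) × ℝ) ∈ S := by
          refine ⟨hξ, ?_⟩
          show g ξ < g ξ + u
          linarith
        have h2 := hφS _ hmem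
        rw [hsplit ξ (g ξ + u), hsplit 0 p0, hφ00] at h2
        have hβne : β ≠ 0 := ne_of_lt hβneg
        have huβ : u * β = -ε := by
          rw [hu, div_mul_eq_mul_div, div_neg, mul_div_assoc, div_self hβne, mul_one]
        nlinarith
      exact le_of_forall_pos_le_add h1
    have hβne : β ≠ 0 := ne_of_lt hβneg
    have hdiv : φ (ξ, (0:ℝ)) = (φ (ξ, (0:ℝ)) / β) * β := by field_simp
    nlinarith [key, hdiv]
  -- globalize by convexity
  have hglob : ∀ ξ : Fin k → ℝ, ((p0 - φ (ξ, (0:ℝ)) / β : ℝ) : EReal) ≤ P ξ := by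
    intro ξ
    set t : ℝ := min (1/2) (δ / (2 * (‖ξ‖ + 1))) with ht
    have hnn : (0:ℝ) ≤ ‖ξ‖ := norm_nonneg _
    have htpos : 0 < t := lt_min (by norm_num) (by positivity)
    have ht1 : t ≤ 1/2 := min_le_left _ _
    have htB : t • ξ ∈ B := by
      rw [hmemB, norm_smul, Real.norm_eq_abs, abs_of_pos htpos]
      have h1 : t ≤ δ / (2 * (‖ξ‖ + 1)) := min_le_right _ _
      have h2 : t * ‖ξ‖ ≤ (δ / (2 * (‖ξ‖ + 1))) * ‖ξ‖ :=
        mul_le_mul_of_nonneg_right h1 hnn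
      have h3 : (δ / (2 * (‖ξ‖ + 1))) * ‖ξ‖ < δ := by
        rw [div_mul_eq_mul_div, div_lt_iff₀ (by positivity)]
        nlinarith
      linarith
    have h2 := hPconv ξ 0 t ⟨le_of_lt htpos, by linarith⟩
    have he : t • ξ + (1 - t) • (0 : Fin k → ℝ) = t • ξ := by simp
    rw [he] at h2
    have hlow : ((p0 - t * (φ (ξ, (0:ℝ)) / β) : ℝ) : EReal) ≤ P (t • ξ) := by
      rw [hgP _ htB]
      apply EReal.coe_le_coe_iff.2
      have h3 := hloc _ htB
      have hsm : ((t • ξ, (0:ℝ)) : (Fin k → ℝ) × ℝ) = t • (ξ, (0:ℝ)) := by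
        simp [Prod.ext_iff]
      rw [hsm, map_smul, smul_eq_mul] at h3
      have he2 : t * φ (ξ, (0:ℝ)) / β = t * (φ (ξ, (0:ℝ)) / β) :=
        mul_div_assoc _ _ _
      linarith [h3, he2]
    rcases eq_top_or_lt_top (P ξ) with h | h
    · rw [h]; exact le_top
    · have hPξtop : P ξ ≠ ⊤ := ne_of_lt h
      rcases eq_bot_or_bot_lt (P ξ) with hb | hb
      · exfalso
        rw [hb] at h2
        have hmul : ((t:ℝ) : EReal) * (⊥ : EReal) = ⊥ := EReal.coe_mul_bot_of_pos htpos
        rw [hmul, EReal.bot_add] at h2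
        exact EReal.coe_ne_bot _ (le_bot_iff.mp (le_trans hlow h2))
      · have hPξbot : P ξ ≠ ⊥ := ne_of_gt hb
        set y : ℝ := (P ξ).toReal with hy
        have hyP : P ξ = ((y : ℝ) : EReal) := (EReal.coe_toReal hPξtop hPξbot).symm
        rw [hgP _ htB] at h2 hlow
        rw [hyP] at h2 ⊢
        rw [hp0, ← EReal.coe_mul, ← EReal.coe_mul, ← EReal.coe_add] at h2
        have h4 : g (t • ξ) ≤ t * y + (1 - t) * p0 := EReal.coe_le_coe_iff.mp h2
        have h5 : p0 - t * (φ (ξ, (0:ℝ)) / β) ≤ g (t • ξ) := EReal.coe_le_coe_iff.mp hlow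
        apply EReal.coe_le_coe_iff.2
        nlinarith
  -- the multipliers
  set σ : Fin k → ℝ := fun i => φ ((Pi.single i 1 : Fin k → ℝ), (0:ℝ)) / β with hσdef
  -- linearity: φ (ξ, 0) / β = ∑ ξ i * σ i
  have hlin : ∀ ξ : Fin k → ℝ, φ (ξ, (0:ℝ)) / β = ∑ i, ξ i * σ i := by
    intro ξ
    have h1 : ∑ i, ξ i • (Pi.single i 1 : Fin k → ℝ) = ξ := by
      rw [Finset.sum_congr rfl fun i _ =>
        (by rw [← Pi.single_smul, smul_eq_mul, mul_one] :
          ξ i • (Pi.single i 1 : Fin k → ℝ) = Pi.single i (ξ i))]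
      exact Finset.univ_sum_single ξ
    have hdec : ((ξ, (0:ℝ)) : (Fin k → ℝ) × ℝ) =
        ∑ i, (ξ i) • ((Pi.single i 1 : Fin k → ℝ), (0:ℝ)) := by
      rw [Prod.ext_iff]
      constructor
      · rw [Prod.fst_sum]
        simpa using h1.symm
      · rw [Prod.snd_sum]
        simp
    rw [hdec, map_sum]
    simp only [map_smul, smul_eq_mul]
    rw [Finset.sum_div]
    refine Finset.sum_congr rfl fun i _ => ?_
    simp only [hσdef]
    ring
  -- monotonicity gives σ i ≤ 0
  have hσnonpos : ∀ i, σ i ≤ 0 := by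
    intro i
    have hmono : P (-(Pi.single i 1 : Fin k → ℝ)) ≤ P 0 := by
      rw [hP, hP]
      refine le_iInf fun θ' => ?_
      refine iInf_le_of_le ⟨θ'.1, fun i' => ?_⟩ le_rfl
      have h1 := θ'.2 i'
      have h2 : (-(Pi.single i 1 : Fin k → ℝ)) i' ≤ 0 := by
        simp only [Pi.neg_apply, neg_nonpos, Pi.single_apply]
        split <;> norm_num
      simp only [Pi.zero_apply, sub_zero] at h1
      linarith
    have h1 := hglob (-(Pi.single i 1 : Fin k → ℝ))
    have he : ((-(Pi.single i 1 : Fin k → ℝ), (0:ℝ)) : (Fin k → ℝ) × ℝ) =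
        -((Pi.single i 1 : Fin k → ℝ), (0:ℝ)) := by simp [Prod.ext_iff]
    rw [he, map_neg] at h1
    have he2 : p0 - (-φ ((Pi.single i 1 : Fin k → ℝ), (0:ℝ))) / β = p0 + σ i := by
      simp only [hσdef]; ring
    have h2 : ((p0 + σ i : ℝ) : EReal) ≤ ((p0 : ℝ) : EReal) := by
      calc ((p0 + σ i : ℝ) : EReal)
          = ((p0 - (-φ ((Pi.single i 1 : Fin k → ℝ), (0:ℝ))) / β : ℝ) : EReal) := by
            rw [he2]
        _ ≤ P (-(Pi.single i 1 : Fin k → ℝ)) := h1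
        _ ≤ P 0 := hmono
        _ = ((p0 : ℝ) : EReal) := hp0
    have := EReal.coe_le_coe_iff.mp h2
    linarith
  -- strong duality direction: P 0 ≤ dual value
  have hge : P 0 ≤ ⨆ lam : {l : Fin k → ℝ // ∀ i, 0 ≤ l i},
      ⨅ θ : EuclideanSpace ℝ (Fin n),
        ((fm θ + ∑ i, lam.1 i * (f i θ - c i - r i) : ℝ) : EReal) := by
    refine le_iSup_of_le ⟨fun i => -σ i, fun i => neg_nonneg.2 (hσnonpos i)⟩
      (le_iInf fun θ => ?_)
    rw [hp0]
    apply EReal.coe_le_coe_iff.2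
    set ξ : Fin k → ℝ := fun i => c i + r i - f i θ with hξdef
    have h1 := hglob ξ
    have h2 : P ξ ≤ ((fm θ : ℝ) : EReal) := by
      rw [hP]
      exact iInf_le_of_le ⟨θ, fun i => le_of_eq (by simp only [hξdef]; ring)⟩ le_rfl
    have h3 := EReal.coe_le_coe_iff.mp (le_trans h1 h2)
    rw [hlin ξ] at h3
    have h4 : ∑ i, (-σ i) * (f i θ - c i - r i) = ∑ i, ξ i * σ i := by
      apply Finset.sum_congr rfl
      intro i _
      simp only [hξdef]; ring
    rw [h4]
    linarith
  -- weak duality direction: dual value ≤ P 0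
  have hle : (⨆ lam : {l : Fin k → ℝ // ∀ i, 0 ≤ l i},
      ⨅ θ : EuclideanSpace ℝ (Fin n),
        ((fm θ + ∑ i, lam.1 i * (f i θ - c i - r i) : ℝ) : EReal)) ≤ P 0 := by
    refine iSup_le fun lam => ?_
    rw [hP 0]
    refine le_iInf fun θ' => ?_
    refine le_trans (iInf_le _ θ'.1) ?_
    apply EReal.coe_le_coe_iff.2
    have hsum : ∑ i, lam.1 i * (f i θ'.1 - c i - r i) ≤ 0 := by
      apply Finset.sum_nonpos
      intro i _
      have h1 := θ'.2 i
      simp only [Pi.zero_apply, sub_zero] at h1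
      exact mul_nonpos_of_nonneg_of_nonpos (lam.2 i) (by linarith)
    linarith
  exact le_antisymm hle hge
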